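/- arXiv:0912.3834 — 3 statements merged into one kernel-verified Lean document; each statement's English description precedes it below -/
import Mathlib

section
/- Let d = ((d_i^+, d_i^-))_{i=1}^N be a digraphic integer-pair sequence. Then any two simple directed graph realizations G and G' of d can be transformed into one another by a finite sequence of moves, each of which is either a 2-switch or a reorientation of an induced directed 3-cycle; equivalently, the meta-graph Ω_d, whose vertices are the realizations in R(d) and whose edges join realizations differing by a single 2-switch or a single directed 3-cycle reorientation, is connected. -/
/-- A simple directed graph on vertex set `V`: an irreflexive (Boolean) arc
relation, i.e. no self-loops and at most one arc in each direction. -/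
structure SDigraph (V : Type) where
  Adj : V → V → Bool
  irrefl : ∀ v, Adj v v = false

/-- Out-degree of a vertex. -/
def SDigraph.outDeg {V : Type} [Fintype V] [DecidableEq V]
    (G : SDigraph V) (v : V) : ℕ :=
  (Finset.univ.filter fun x => G.Adj v x = true).card

/-- In-degree of a vertex. -/
def SDigraph.inDeg {V : Type} [Fintype V] [DecidableEq V]
    (G : SDigraph V) (v : V) : ℕ :=
  (Finset.univ.filter fun x => G.Adj x v = true).card

/-- `G` realizes the integer-pair (degree) sequence `d`: vertex `v` has
out-degree `(d v).1` and in-degree `(d v).2`. -/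
def Realizes {V : Type} [Fintype V] [DecidableEq V]
    (G : SDigraph V) (d : V → ℕ × ℕ) : Prop :=
  ∀ v, G.outDeg v = (d v).1 ∧ G.inDeg v = (d v).2

/-- `H` is obtained from `G` by a single 2-switch: arcs `(v₁,v₂)`, `(v₃,v₄)`
are replaced by `(v₁,v₄)`, `(v₃,v₂)`, allowed only when the four vertices
are distinct, the former two are arcs and the latter two are not. -/
def TwoSwitch {V : Type} [DecidableEq V] (G H : SDigraph V) : Prop :=
  ∃ v₁ v₂ v₃ v₄ : V,
    v₁ ≠ v₂ ∧ v₁ ≠ v₃ ∧ v₁ ≠ v₄ ∧ v₂ ≠ v₃ ∧ v₂ ≠ v₄ ∧ v₃ ≠ v₄ ∧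
    G.Adj v₁ v₂ = true ∧ G.Adj v₃ v₄ = true ∧
    G.Adj v₁ v₄ = false ∧ G.Adj v₃ v₂ = false ∧
    ∀ x y, H.Adj x y =
      if (x = v₁ ∧ y = v₂) ∨ (x = v₃ ∧ y = v₄) then false
      else if (x = v₁ ∧ y = v₄) ∨ (x = v₃ ∧ y = v₂) then true
      else G.Adj x y

/-- `G` and `H` differ by a single 2-switch (in either direction). -/
def TwoSwitchStep {V : Type} [DecidableEq V] (G H : SDigraph V) : Prop :=
  TwoSwitch G H ∨ TwoSwitch H G

/-- `H` is reachable from `G` by a finite sequence of 2-switches. -/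
def Reach2 {V : Type} [DecidableEq V] (G H : SDigraph V) : Prop :=
  Relation.ReflTransGen TwoSwitchStep G H

/-- `H` is obtained from `G` by reorienting an induced directed 3-cycle:
there are distinct `u v w` with arcs `(u,v),(v,w),(w,u)` and no arcs
`(v,u),(w,v),(u,w)`, and `H` replaces these three arcs by the reversed ones. -/
def CycleReorient {V : Type} [DecidableEq V] (G H : SDigraph V) : Prop :=
  ∃ u v w : V, u ≠ v ∧ v ≠ w ∧ u ≠ w ∧
    G.Adj u v = true ∧ G.Adj v w = true ∧ G.Adj w u = true ∧
    G.Adj v u = false ∧ G.Adj w v = false ∧ G.Adj u w = false ∧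
    ∀ x y, H.Adj x y =
      if (x = u ∨ x = v ∨ x = w) ∧ (y = u ∨ y = v ∨ y = w) then G.Adj y x
      else G.Adj x y

/-- The three vertices `u, v, w` induce a directed 3-cycle in `G`: the induced
subgraph on them consists of exactly the three arcs of one cyclic orientation. -/
def InducesC3 {V : Type} (G : SDigraph V) (u v w : V) : Prop :=
  (G.Adj u v = true ∧ G.Adj v w = true ∧ G.Adj w u = true ∧
    G.Adj v u = false ∧ G.Adj w v = false ∧ G.Adj u w = false) ∨
  (G.Adj v u = true ∧ G.Adj w v = true ∧ G.Adj u w = true ∧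
    G.Adj u v = false ∧ G.Adj v w = false ∧ G.Adj w u = false)

/-- The digraph obtained from `G` by reversing all arcs among `{u, v, w}`
(and leaving all other arcs unchanged).  When `{u,v,w}` induces a directed
3-cycle in `G`, this is exactly the reorientation of that 3-cycle. -/
def flip3 {V : Type} [DecidableEq V] (G : SDigraph V) (u v w : V) : SDigraph V where
  Adj x y :=
    if (x = u ∨ x = v ∨ x = w) ∧ (y = u ∨ y = v ∨ y = w) then G.Adj y x
    else G.Adj x y
  irrefl := by
    intro x
    try simp only []
    rw [ite_self]
    exact G.irrefl x


/-!
If `A ≠ B` have the same degrees, then at every vertex the arcs of `A` only and the arcs of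
`B` only are equally many in each direction, so they can be chained into a closed alternating
walk: an `A`-only arc `i t → j t`, a `B`-only arc `i t → j (t + 1)`, and so on. Take such a
walk of minimal length. By minimality every chord `i s → j t` is an arc of both graphs or of
neither. If some `i (s + 1) ≠ j s`, the two `A`-only arcs at `s` and `s + 1` together with the
chord `i (s + 1) → j s` admit a 2-switch, in `A` or in `B`, that removes at least two of the
differences. Otherwise the `A`-only arcs form a directed cycle `i 0 → i 1 → ⋯`; of length
three it is an induced directed triangle of `A` that is reversed in `B`, and of length at
least four the chord `i 0 → i 3` again admits a 2-switch. Induction on the number of ordered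
pairs on which `A` and `B` differ finishes the proof.
-/

open Finset

namespace SDigraph

variable {V : Type}

theorem ext {G H : SDigraph V} (h : ∀ x y, G.Adj x y = H.Adj x y) : G = H := by
  cases G; cases H
  congr
  funext x y
  exact h x y

def reverse (G : SDigraph V) : SDigraph V where
  Adj x y := G.Adj y x
  irrefl := G.irrefl

theorem ne_of_adj {G : SDigraph V} {x y : V} (h : G.Adj x y = true) : x ≠ y := by
  rintro rfl
  simp [G.irrefl] at h

variable [Fintype V]

def arcDiff (G H : SDigraph V) : Finset (V × V) :=
  univ.filter fun p => G.Adj p.1 p.2 ≠ H.Adj p.1 p.2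

def arcDist (G H : SDigraph V) : ℕ := #(arcDiff G H)

theorem arcDist_comm (G H : SDigraph V) : arcDist G H = arcDist H G := by
  simp only [arcDist, arcDiff, ne_comm]

variable [DecidableEq V]

def degSeq (G : SDigraph V) (v : V) : ℕ × ℕ := (G.outDeg v, G.inDeg v)

theorem realizes_iff_degSeq_eq {G : SDigraph V} {d : V → ℕ × ℕ} :
    Realizes G d ↔ G.degSeq = d := by
  simp only [Realizes, funext_iff, degSeq, Prod.ext_iff]

theorem outDeg_congr {G H : SDigraph V} {v : V} (h : ∀ y, H.Adj v y = G.Adj v y) :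
    H.outDeg v = G.outDeg v := by
  simp only [outDeg, h]

theorem inDeg_congr {G H : SDigraph V} {v : V} (h : ∀ y, H.Adj y v = G.Adj y v) :
    H.inDeg v = G.inDeg v :=
  outDeg_congr (G := G.reverse) (H := H.reverse) h

theorem outDeg_eq_of_exchange {G H : SDigraph V} {v b d : V} (hbd : b ≠ d)
    (hb : G.Adj v b = true) (hd : G.Adj v d = false)
    (h : ∀ y, H.Adj v y = if y = b then false else if y = d then true else G.Adj v y) :
    H.outDeg v = G.outDeg v := by
  have hrow : (univ.filter fun y => H.Adj v y = true) =
      insert d ((univ.filter fun y => G.Adj v y = true).erase b) := by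
    ext y
    by_cases hyb : y = b <;> by_cases hyd : y = d <;> simp_all
  have hb' : b ∈ univ.filter fun y => G.Adj v y = true := by simp [hb]
  have hd' : d ∉ (univ.filter fun y => G.Adj v y = true).erase b := by simp [hd]
  rw [outDeg, outDeg, hrow, card_insert_of_notMem hd', card_erase_add_one hb']

theorem inDeg_eq_of_exchange {G H : SDigraph V} {v b d : V} (hbd : b ≠ d)
    (hb : G.Adj b v = true) (hd : G.Adj d v = false)
    (h : ∀ y, H.Adj y v = if y = b then false else if y = d then true else G.Adj y v) :
    H.inDeg v = G.inDeg v :=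
  outDeg_eq_of_exchange (G := G.reverse) (H := H.reverse) hbd hb hd h

theorem arcDist_lt_of_eq_off {G H Y : SDigraph V} (E : Finset (V × V))
    (hoff : ∀ p ∉ E, H.Adj p.1 p.2 = G.Adj p.1 p.2)
    (hlt : #(arcDiff H Y ∩ E) < #(arcDiff G Y ∩ E)) : arcDist H Y < arcDist G Y := by
  have hout : arcDiff H Y \ E = arcDiff G Y \ E := by
    ext p
    by_cases hp : p ∈ E <;> simp [arcDiff, hp, hoff]
  rw [arcDist, arcDist, ← card_inter_add_card_sdiff _ E,
    ← card_inter_add_card_sdiff (arcDiff G Y) E, hout]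
  omega

end SDigraph

open SDigraph

def OnlyArc {V : Type} (A B : SDigraph V) (x y : V) : Prop := A.Adj x y = true ∧ B.Adj x y = false

/-- An alternating cycle of length `2m` in the symmetric difference of `A` and `B`, read with
period `m`: the red arcs `i t → j t` lie only in `A`, the blue arcs `i t → j (t + 1)` only
in `B`. -/
structure IsAltCycle {V : Type} (A B : SDigraph V) (m : ℕ) (i j : ℕ → V) : Prop where
  pos : 0 < m
  periodic_i : Function.Periodic i m
  periodic_j : Function.Periodic j m
  red : ∀ t, OnlyArc A B (i t) (j t)
  blue : ∀ t, OnlyArc B A (i t) (j (t + 1))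

namespace IsAltCycle

variable {V : Type} {A B : SDigraph V} {m : ℕ} {i j : ℕ → V}

theorem of_lt {d : ℕ} (hd : 0 < d) {f g : ℕ → V} (hred : ∀ t < d, OnlyArc A B (f t) (g t))
    (hblue : ∀ t < d, OnlyArc B A (f t) (g ((t + 1) % d))) :
    IsAltCycle A B d (fun t => f (t % d)) (fun t => g (t % d)) where
  pos := hd
  periodic_i t := by simp
  periodic_j t := by simp
  red t := hred _ (Nat.mod_lt t hd)
  blue t := by simpa [Nat.add_mod] using hblue _ (Nat.mod_lt t hd)

theorem two_le (h : IsAltCycle A B m i j) : 2 ≤ m := by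
  by_contra hm
  have hm1 : m = 1 := by have := h.pos; omega
  have hj : j (0 + 1) = j 0 := hm1 ▸ h.periodic_j 0
  have := (h.blue 0).2
  simp [hj, (h.red 0).1] at this

theorem exists_of_red_chord (h : IsAltCycle A B m i j) {s d : ℕ} (hd : 0 < d)
    (hc : OnlyArc A B (i s) (j (s + d))) : ∃ i' j', IsAltCycle A B d i' j' := by
  refine ⟨_, _, of_lt hd (f := fun t => i (s + t))
    (g := fun t => if t = 0 then j (s + d) else j (s + t)) (fun t _ => ?_) (fun t ht => ?_)⟩
  · by_cases ht0 : t = 0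
    · simpa [ht0] using hc
    · simpa [ht0] using h.red (s + t)
  · have hg : (if (t + 1) % d = 0 then j (s + d) else j (s + (t + 1) % d)) = j (s + t + 1) := by
      rcases Nat.lt_or_ge (t + 1) d with ht1 | ht1
      · simp [Nat.mod_eq_of_lt ht1, add_assoc]
      · obtain rfl : d = t + 1 := by omega
        simp [add_assoc]
    simpa only [hg] using h.blue (s + t)

theorem exists_of_blue_chord (h : IsAltCycle A B m i j) {s e : ℕ}
    (hc : OnlyArc B A (i (s + e)) (j s)) : ∃ i' j', IsAltCycle A B (e + 1) i' j' := by
  refine ⟨_, _, of_lt e.succ_pos (f := fun t => i (s + t)) (g := fun t => j (s + t))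
    (fun t _ => h.red (s + t)) (fun t ht => ?_)⟩
  rcases Nat.lt_or_ge t e with hte | hte
  · simpa [Nat.mod_eq_of_lt (show t + 1 < e + 1 by omega), add_assoc] using h.blue (s + t)
  · obtain rfl : t = e := by omega
    simpa using hc

section Minimal

variable (h : IsAltCycle A B m i j) (hmin : ∀ k < m, ∀ i' j', ¬IsAltCycle A B k i' j')
include h hmin

theorem not_onlyArc_of_minimal {s d : ℕ} (hd : 0 < d) (hdm : d < m) :
    ¬OnlyArc A B (i s) (j (s + d)) := fun hc =>
  have ⟨_, _, h'⟩ := h.exists_of_red_chord hd hc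
  hmin d hdm _ _ h'

theorem not_onlyArc_symm_of_minimal {s d : ℕ} (hd : 2 ≤ d) (hdm : d ≤ m) :
    ¬OnlyArc B A (i s) (j (s + d)) := fun hc => by
  have hi : i (s + d + (m - d)) = i s := by
    rw [show s + d + (m - d) = s + m by omega, h.periodic_i]
  obtain ⟨_, _, h'⟩ := h.exists_of_blue_chord (hi ▸ hc)
  exact hmin (m - d + 1) (by omega) _ _ h'

theorem adj_eq_of_minimal {s d : ℕ} (hd : 2 ≤ d) (hdm : d < m) :
    A.Adj (i s) (j (s + d)) = B.Adj (i s) (j (s + d)) := by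
  have hred := h.not_onlyArc_of_minimal hmin (s := s) (by omega) hdm
  have hblue := h.not_onlyArc_symm_of_minimal hmin (s := s) hd hdm.le
  unfold OnlyArc at hred hblue
  cases hA : A.Adj (i s) (j (s + d)) <;> cases hB : B.Adj (i s) (j (s + d)) <;> simp_all

end Minimal

end IsAltCycle

theorem Finite.exists_mem_periodicPts {α : Type*} [Finite α] [Nonempty α] (f : α → α) :
    ∃ y, y ∈ Function.periodicPts f := by
  let x := Classical.arbitrary α
  obtain ⟨a, b, hab, he⟩ := Finite.exists_ne_map_eq_of_infinite fun n => f^[n] x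
  wlog hlt : a < b generalizing a b
  · exact this b a hab.symm he.symm (by omega)
  refine ⟨f^[a] x, Function.mem_periodicPts.mpr ⟨b - a, by omega, ?_⟩⟩
  rw [Function.IsPeriodicPt, Function.IsFixedPt, ← Function.iterate_add_apply,
    Nat.sub_add_cancel hlt.le, he]

variable {V : Type} [Fintype V] [DecidableEq V]

theorem TwoSwitch.degSeq_eq {G H : SDigraph V} (h : TwoSwitch G H) : H.degSeq = G.degSeq := by
  obtain ⟨a, b, c, d, hab, hac, had, hbc, hbd, hcd, hGab, hGcd, hGad, hGcb, hH⟩ := h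
  funext x
  refine Prod.ext ?_ ?_
  · by_cases hxa : x = a
    · subst hxa
      exact outDeg_eq_of_exchange hbd hGab hGad fun y => by grind
    by_cases hxc : x = c
    · subst hxc
      exact outDeg_eq_of_exchange hbd.symm hGcd hGcb fun y => by grind
    exact outDeg_congr fun y => by grind
  · by_cases hxb : x = b
    · subst hxb
      exact inDeg_eq_of_exchange hac hGab hGcb fun y => by grind
    by_cases hxd : x = d
    · subst hxd
      exact inDeg_eq_of_exchange hac.symm hGcd hGad fun y => by grind
    exact inDeg_congr fun y => by grind

theorem CycleReorient.degSeq_eq {G H : SDigraph V} (h : CycleReorient G H) :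
    H.degSeq = G.degSeq := by
  obtain ⟨u, v, w, huv, hvw, huw, hGuv, hGvw, hGwu, hGvu, hGwv, hGuw, hH⟩ := h
  have hGuu := G.irrefl u
  have hGvv := G.irrefl v
  have hGww := G.irrefl w
  funext x
  refine Prod.ext ?_ ?_
  · by_cases hxu : x = u
    · subst hxu
      exact outDeg_eq_of_exchange hvw hGuv hGuw fun y => by grind
    by_cases hxv : x = v
    · subst hxv
      exact outDeg_eq_of_exchange huw.symm hGvw hGvu fun y => by grind
    by_cases hxw : x = w
    · subst hxw
      exact outDeg_eq_of_exchange huv hGwu hGwv fun y => by grind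
    exact outDeg_congr fun y => by grind
  · by_cases hxu : x = u
    · subst hxu
      exact inDeg_eq_of_exchange hvw.symm hGwu hGvu fun y => by grind
    by_cases hxv : x = v
    · subst hxv
      exact inDeg_eq_of_exchange huw hGuv hGwv fun y => by grind
    by_cases hxw : x = w
    · subst hxw
      exact inDeg_eq_of_exchange huv.symm hGvw hGuw fun y => by grind
    exact inDeg_congr fun y => by grind

def Move (G H : SDigraph V) : Prop := TwoSwitch G H ∨ CycleReorient G H

theorem Move.degSeq_eq {G H : SDigraph V} (h : Move G H) : H.degSeq = G.degSeq :=
  h.elim TwoSwitch.degSeq_eq CycleReorient.degSeq_eq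

def CanApproach (X Y : SDigraph V) : Prop := ∃ X', Move X X' ∧ arcDist X' Y < arcDist X Y

theorem canApproach_by_twoSwitch {X Y : SDigraph V} {a b c d : V} (hcb : c ≠ b)
    (hab : OnlyArc X Y a b) (had : OnlyArc Y X a d) (hXcd : X.Adj c d = true)
    (hXcb : X.Adj c b = false) (hY : Y.Adj c d = false ∨ Y.Adj c b = true) :
    CanApproach X Y := by
  -- The 2-switch `(a,b), (c,d) ↦ (a,d), (c,b)` in `X` repairs `(a,b)`, `(a,d)` and, by `hY`, one
  -- of `(c,d)`, `(c,b)`; it can spoil at most the remaining pair.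
  have hab' : a ≠ b := ne_of_adj hab.1
  have had' : a ≠ d := ne_of_adj had.1
  have hcd' : c ≠ d := ne_of_adj hXcd
  have hac : a ≠ c := by rintro rfl; simp [hab.1] at hXcb
  have hbd : b ≠ d := by rintro rfl; exact absurd had.2 (by simp [hab.1])
  let X' : SDigraph V :=
    { Adj := fun x y =>
        if (x = a ∧ y = b) ∨ (x = c ∧ y = d) then false
        else if (x = a ∧ y = d) ∨ (x = c ∧ y = b) then true
        else X.Adj x y
      irrefl := fun x => by grind [X.irrefl x] }
  refine ⟨X', .inl ⟨a, b, c, d, hab', hac, had', hcb.symm, hbd, hcd', hab.1, hXcd, had.2, hXcb,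
    fun _ _ => rfl⟩, ?_⟩
  apply arcDist_lt_of_eq_off {(a, b), (a, d), (c, d), (c, b)}
  · intro p hp
    simp only [mem_insert, mem_singleton, not_or] at hp
    grind
  · have hnew : #(arcDiff X' Y ∩ {(a, b), (a, d), (c, d), (c, b)}) ≤ 1 := by
      rw [card_le_one]
      simp only [arcDiff, mem_inter, mem_filter, mem_univ, true_and, mem_insert, mem_singleton]
      grind [OnlyArc]
    have hold : 2 ≤ #(arcDiff X Y ∩ {(a, b), (a, d), (c, d), (c, b)}) := by
      refine le_trans ?_ (card_le_card (s := {(a, b), (a, d)}) ?_)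
      · rw [card_pair (by simp [hbd])]
      · intro p hp
        simp only [mem_insert, mem_singleton] at hp
        rcases hp with rfl | rfl <;> simp_all [arcDiff, OnlyArc]
    omega

theorem canApproach_by_cycleReorient {X Y : SDigraph V} {u v w : V}
    (huv : OnlyArc X Y u v) (hvw : OnlyArc X Y v w) (hwu : OnlyArc X Y w u)
    (hvu : OnlyArc Y X v u) (hwv : OnlyArc Y X w v) (huw : OnlyArc Y X u w) :
    CanApproach X Y := by
  refine ⟨flip3 X u v w, .inr ⟨u, v, w, ne_of_adj huv.1, ne_of_adj hvw.1, ne_of_adj huw.1,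
    huv.1, hvw.1, hwu.1, hvu.2, hwv.2, huw.2, fun _ _ => rfl⟩, ?_⟩
  apply arcDist_lt_of_eq_off {(u, v), (v, w), (w, u), (v, u), (w, v), (u, w)}
  · intro p hp
    simp only [mem_insert, mem_singleton, not_or] at hp
    simp only [flip3]
    grind [X.irrefl p.1]
  · have hflip : arcDiff (flip3 X u v w) Y ∩ {(u, v), (v, w), (w, u), (v, u), (w, v), (u, w)}
        = ∅ := by
      ext p
      simp only [arcDiff, flip3, mem_inter, mem_insert, mem_singleton, notMem_empty, iff_false,
        not_and]
      grind [OnlyArc]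
    rw [hflip, card_empty, card_pos]
    exact ⟨(u, v), by simp [arcDiff, huv.1, huv.2]⟩

theorem exists_onlyArc_of_outDeg_eq {A B : SDigraph V} {x y : V}
    (hdeg : A.outDeg x = B.outDeg x) (h : OnlyArc A B x y) : ∃ z, OnlyArc B A x z := by
  by_contra! hz
  have hsub :
      (univ.filter fun z => B.Adj x z = true) ⊆ univ.filter fun z => A.Adj x z = true := by
    intro z hBz
    simp only [mem_filter, mem_univ, true_and] at hBz ⊢
    by_contra hAz
    exact hz z ⟨hBz, by simpa using hAz⟩
  have hy : y ∈ univ.filter fun z => B.Adj x z = true := by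
    rw [eq_of_subset_of_card_le hsub hdeg.le]
    simp [h.1]
  simp [h.2] at hy

theorem exists_onlyArc_of_inDeg_eq {A B : SDigraph V} {x y : V} (hdeg : A.inDeg y = B.inDeg y)
    (h : OnlyArc B A x y) : ∃ z, OnlyArc A B z y :=
  exists_onlyArc_of_outDeg_eq (A := B.reverse) (B := A.reverse) hdeg.symm h

/-- Follow an `A`-only arc by a `B`-only arc with the same tail and then an `A`-only arc with the
same head; equal degrees make this always possible, and finiteness closes the walk up. -/
theorem exists_isAltCycle {A B : SDigraph V} (hdeg : A.degSeq = B.degSeq) (hne : A ≠ B) :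
    ∃ m i j, IsAltCycle A B m i j := by
  have hout x : A.outDeg x = B.outDeg x := congrArg Prod.fst (congrFun hdeg x)
  have hin x : A.inDeg x = B.inDeg x := congrArg Prod.snd (congrFun hdeg x)
  have : Nonempty {p : V × V // OnlyArc A B p.1 p.2} := by
    obtain ⟨x, y, hxy⟩ : ∃ x y, A.Adj x y ≠ B.Adj x y := by
      by_contra! h
      exact hne (ext h)
    cases hA : A.Adj x y
    · obtain ⟨z, hz⟩ := exists_onlyArc_of_inDeg_eq (hin y)
        (⟨by simpa [hA] using hxy.symm, hA⟩ : OnlyArc B A x y)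
      exact ⟨⟨(z, y), hz⟩⟩
    · exact ⟨⟨(x, y), hA, by simpa [hA] using hxy.symm⟩⟩
  have hnext (p : {p : V × V // OnlyArc A B p.1 p.2}) :
      ∃ q : {p : V × V // OnlyArc A B p.1 p.2}, OnlyArc B A p.1.1 q.1.2 := by
    obtain ⟨z, hz⟩ := exists_onlyArc_of_outDeg_eq (hout _) p.2
    obtain ⟨w, hw⟩ := exists_onlyArc_of_inDeg_eq (hin z) hz
    exact ⟨⟨(w, z), hw⟩, hz⟩
  choose next hnext using hnext
  obtain ⟨p, n, hn, hp⟩ := Finite.exists_mem_periodicPts next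
  have hper : Function.Periodic (fun t => next^[t] p) n := fun t => by
    simp only [Function.iterate_add_apply, hp.eq]
  refine ⟨n, fun t => (next^[t] p).1.1, fun t => (next^[t] p).1.2, hn,
    fun t => congrArg (·.1.1) (hper t), fun t => congrArg (·.1.2) (hper t),
    fun t => (next^[t] p).2, fun t => ?_⟩
  simpa only [Function.iterate_succ_apply'] using hnext (next^[t] p)

namespace IsAltCycle

variable {A B : SDigraph V} {m : ℕ} {i j : ℕ → V}
variable (h : IsAltCycle A B m i j) (hmin : ∀ k < m, ∀ i' j', ¬IsAltCycle A B k i' j')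
include h hmin

theorem canApproach_of_succ_ne {s : ℕ} (hs : i (s + 1) ≠ j s) :
    CanApproach A B ∨ CanApproach B A := by
  have hchord : A.Adj (i (s + 1)) (j s) = true → B.Adj (i (s + 1)) (j s) = true := by
    have hm := h.two_le
    have hj : j (s + 1 + (m - 1)) = j s := by
      rw [show s + 1 + (m - 1) = s + m by omega, h.periodic_j]
    have := h.not_onlyArc_of_minimal hmin (s := s + 1) (d := m - 1) (by omega) (by omega)
    rw [hj] at this
    simpa [OnlyArc] using this
  cases hA : A.Adj (i (s + 1)) (j s)
  · exact .inl <| canApproach_by_twoSwitch hs (h.red s) (h.blue s) (h.red (s + 1)).1 hA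
      (.inl (h.red (s + 1)).2)
  · exact .inr <| canApproach_by_twoSwitch (ne_of_adj (h.red (s + 1)).1) (h.blue s) (h.red s)
      (hchord hA) (h.red (s + 1)).2 (.inr (h.red (s + 1)).1)

theorem canApproach_of_succ_eq (hsucc : ∀ s, i (s + 1) = j s) :
    CanApproach A B ∨ CanApproach B A := by
  have red t : OnlyArc A B (i t) (i (t + 1)) := hsucc t ▸ h.red t
  have blue t : OnlyArc B A (i t) (i (t + 2)) := hsucc (t + 1) ▸ h.blue t
  have hi t : i (t + m) = i t := h.periodic_i t
  have hm3 : 3 ≤ m := by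
    rcases Nat.lt_or_ge m 3 with hm | hm
    · obtain rfl : m = 2 := by have := h.two_le; omega
      exact absurd (hi 0).symm (ne_of_adj (blue 0).1)
    · exact hm
  rcases hm3.eq_or_lt with rfl | hm4
  · have hwu := red 2
    have hvu := blue 1
    have hwv := blue 2
    simp only [Nat.reduceAdd, hi 0, hi 1] at hwu hvu hwv
    exact .inl <| canApproach_by_cycleReorient (red 0) (red 1) hwu hvu hwv (blue 0)
  · have hchord : A.Adj (i 0) (i 3) = B.Adj (i 0) (i 3) := by
      simpa [hsucc] using h.adj_eq_of_minimal hmin (s := 0) le_rfl (by omega)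
    have h03 : i 0 ≠ i 3 := fun h03 => by
      have hj : j (3 + (m - 3)) = j 0 := by
        rw [show 3 + (m - 3) = 0 + m by omega, h.periodic_j]
      have := h.not_onlyArc_of_minimal hmin (s := 3) (d := m - 3) (by omega) (by omega)
      rw [hj, ← h03] at this
      exact this (h.red 0)
    cases hA : A.Adj (i 0) (i 3)
    · exact .inr <| canApproach_by_twoSwitch h03 (blue 1) (red 1) (blue 0).1 (hchord ▸ hA)
        (.inl (blue 0).2)
    · exact .inl <| canApproach_by_twoSwitch (ne_of_adj (blue 0).1) (red 1) (blue 1) hA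
        (blue 0).2 (.inr (blue 0).1)

end IsAltCycle

theorem canApproach_or_canApproach {A B : SDigraph V} (hdeg : A.degSeq = B.degSeq) (hne : A ≠ B) :
    CanApproach A B ∨ CanApproach B A := by
  classical
  have hex := exists_isAltCycle hdeg hne
  obtain ⟨i, j, h⟩ := Nat.find_spec hex
  have hmin : ∀ k < Nat.find hex, ∀ i' j', ¬IsAltCycle A B k i' j' := fun k hk i' j' h' =>
    Nat.find_min hex hk ⟨i', j', h'⟩
  by_cases hsucc : ∀ s, i (s + 1) = j s
  · exact h.canApproach_of_succ_eq hmin hsucc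
  · obtain ⟨s, hs⟩ := not_forall.mp hsucc
    exact h.canApproach_of_succ_ne hmin hs

theorem reflTransGen_move_of_degSeq_eq {A B : SDigraph V} (hdeg : A.degSeq = B.degSeq) :
    Relation.ReflTransGen (fun X Y => Move X Y ∨ Move Y X) A B := by
  induction hn : arcDist A B using Nat.strong_induction_on generalizing A B with
  | _ n ih =>
  by_cases hAB : A = B
  · exact hAB ▸ .refl
  rcases canApproach_or_canApproach hdeg hAB with ⟨A', hA', hlt⟩ | ⟨B', hB', hlt⟩
  · exact .head (.inl hA') (ih _ (hn ▸ hlt) ((Move.degSeq_eq hA').trans hdeg) rfl)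
  · rw [arcDist_comm B', arcDist_comm B] at hlt
    exact .tail (ih _ (hn ▸ hlt) (hdeg.trans (Move.degSeq_eq hB').symm) rfl) (.inr hB')

theorem statement0_general {N : ℕ} (d : Fin N → ℕ × ℕ)
    (G H : SDigraph (Fin N)) (hG : Realizes G d) (hH : Realizes H d) :
    Relation.ReflTransGen
      (fun X Y => TwoSwitch X Y ∨ TwoSwitch Y X ∨
        CycleReorient X Y ∨ CycleReorient Y X) G H := by
  have hdeg : G.degSeq = H.degSeq :=
    (realizes_iff_degSeq_eq.mp hG).trans (realizes_iff_degSeq_eq.mp hH).symm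
  refine Relation.ReflTransGen.mono (fun X Y hXY => ?_) _ _ (reflTransGen_move_of_degSeq_eq hdeg)
  unfold Move at hXY
  tauto

/-- Rao et al.: for a digraphic integer-pair sequence `d`,
any two realizations of `d` are connected by a finite sequence of moves, each
a 2-switch or a directed 3-cycle reorientation; i.e. the meta-graph `Ω_d` is
connected. -/
theorem statement0 {N : ℕ} (d : Fin N → ℕ × ℕ)
    (hd : ∃ G : SDigraph (Fin N), Realizes G d)
    (G H : SDigraph (Fin N)) (hG : Realizes G d) (hH : Realizes H d) :
    Relation.ReflTransGen
      (fun X Y => TwoSwitch X Y ∨ TwoSwitch Y X ∨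
        CycleReorient X Y ∨ CycleReorient Y X) G H :=
  statement0_general d G H hG hH
end

section
/- Let G be a simple digraph containing three distinct vertices u, v, w with arcs (u,v),(v,w),(w,u) and no arcs (v,u),(w,v),(u,w), and suppose there is a vertex x ∉ {u,v,w} such that (v,x) is an arc of G while (u,x) and (w,x) are not arcs of G. Then G can be transformed by a finite sequence of 2-switches into the digraph G' obtained from G by reorienting the directed 3-cycle on {u,v,w} (replacing arcs (u,v),(v,w),(w,u) with (v,u),(w,v),(u,w) and leaving all other arcs unchanged). -/
/-!
The arc into `x` serves as a pivot.  The 2-switches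
`(v,x),(w,u) ↦ (v,u),(w,x)`, then `(u,v),(w,x) ↦ (u,x),(w,v)`, then `(v,w),(u,x) ↦ (v,x),(u,w)`
each reverse one arc of the 3-cycle while passing the arc into `x` from `v` to `w` to `u` and back
to `v`, so the net effect is exactly the reorientation of the cycle.
-/

namespace SDigraph

attribute [ext] SDigraph

variable {V : Type} [DecidableEq V]

def switch (G : SDigraph V) (a b c d : V) (had : a ≠ d) (hcb : c ≠ b) : SDigraph V where
  Adj x y :=
    if (x = a ∧ y = b) ∨ (x = c ∧ y = d) then false
    else if (x = a ∧ y = d) ∨ (x = c ∧ y = b) then true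
    else G.Adj x y
  irrefl z := by grind [G.irrefl z]

theorem switch_adj (G : SDigraph V) (a b c d : V) (had : a ≠ d) (hcb : c ≠ b) (x y : V) :
    (G.switch a b c d had hcb).Adj x y =
      if (x = a ∧ y = b) ∨ (x = c ∧ y = d) then false
      else if (x = a ∧ y = d) ∨ (x = c ∧ y = b) then true
      else G.Adj x y :=
  rfl

theorem twoSwitch_switch (G : SDigraph V) {a b c d : V}
    (hab : a ≠ b) (hac : a ≠ c) (had : a ≠ d) (hbc : b ≠ c) (hbd : b ≠ d) (hcd : c ≠ d)
    (hab' : G.Adj a b = true) (hcd' : G.Adj c d = true)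
    (had' : G.Adj a d = false) (hcb' : G.Adj c b = false) :
    TwoSwitch G (G.switch a b c d had hbc.symm) :=
  ⟨a, b, c, d, hab, hac, had, hbc, hbd, hcd, hab', hcd', had', hcb', fun _ _ => rfl⟩

end SDigraph

theorem TwoSwitch.reach2 {V : Type} [DecidableEq V] {G H : SDigraph V} (h : TwoSwitch G H) :
    Reach2 G H :=
  .single (.inl h)

theorem flip3_eq_switch {V : Type} [DecidableEq V] (G : SDigraph V)
    (u v w : V) (huv : u ≠ v) (hvw : v ≠ w) (huw : u ≠ w)
    (hc : G.Adj u v = true ∧ G.Adj v w = true ∧ G.Adj w u = true ∧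
      G.Adj v u = false ∧ G.Adj w v = false ∧ G.Adj u w = false)
    (x : V) (hxu : x ≠ u) (hxv : x ≠ v) (hxw : x ≠ w)
    (hvx : G.Adj v x = true) (hux : G.Adj u x = false) (hwx : G.Adj w x = false) :
    flip3 G u v w = ((G.switch v x w u huv.symm hxw.symm).switch u v w x hxu.symm hvw.symm).switch
      v w u x hxv.symm huw := by
  ext p q
  simp only [SDigraph.switch_adj, flip3]
  grind (splits := 30) [G.irrefl]

theorem statement5_general {V : Type} [DecidableEq V] (G : SDigraph V)
    (u v w : V) (huv : u ≠ v) (hvw : v ≠ w) (huw : u ≠ w)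
    (hc : G.Adj u v = true ∧ G.Adj v w = true ∧ G.Adj w u = true ∧
      G.Adj v u = false ∧ G.Adj w v = false ∧ G.Adj u w = false)
    (x : V) (hxu : x ≠ u) (hxv : x ≠ v) (hxw : x ≠ w)
    (hvx : G.Adj v x = true) (hux : G.Adj u x = false) (hwx : G.Adj w x = false) :
    Reach2 G (flip3 G u v w) := by
  rw [flip3_eq_switch G u v w huv hvw huw hc x hxu hxv hxw hvx hux hwx]
  refine ((G.twoSwitch_switch ?_ ?_ ?_ ?_ ?_ ?_ ?_ ?_ ?_ ?_).reach2.trans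
    (SDigraph.twoSwitch_switch _ ?_ ?_ ?_ ?_ ?_ ?_ ?_ ?_ ?_ ?_).reach2).trans
    (SDigraph.twoSwitch_switch _ ?_ ?_ ?_ ?_ ?_ ?_ ?_ ?_ ?_ ?_).reach2
  all_goals grind [SDigraph.switch_adj]

/-- if `G` has a directed 3-cycle `(u,v),(v,w),(w,u)` (with no
reverse arcs) and a vertex `x ∉ {u,v,w}` with `(v,x)` an arc but `(u,x)` and
`(w,x)` not arcs, then `G` can be transformed by a finite sequence of
2-switches into the digraph obtained by reorienting the 3-cycle on `{u,v,w}`. -/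
theorem statement5 {V : Type} [Fintype V] [DecidableEq V] (G : SDigraph V)
    (u v w : V) (huv : u ≠ v) (hvw : v ≠ w) (huw : u ≠ w)
    (hc : G.Adj u v = true ∧ G.Adj v w = true ∧ G.Adj w u = true ∧
      G.Adj v u = false ∧ G.Adj w v = false ∧ G.Adj u w = false)
    (x : V) (hxu : x ≠ u) (hxv : x ≠ v) (hxw : x ≠ w)
    (hvx : G.Adj v x = true) (hux : G.Adj u x = false) (hwx : G.Adj w x = false) :
    Reach2 G (flip3 G u v w) :=
  statement5_general G u v w huv hvw huw hc x hxu hxv hxw hvx hux hwx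
end

section
/- Let d be a digraphic integer-pair sequence such that in every realization G ∈ R(d) the three distinct vertices of a fixed set C = {u,v,w} induce a directed 3-cycle, and fix a realization G ∈ R(d) in which the arcs are (u,v),(v,w),(w,u). Then every vertex x ∉ C falls into one of the four classes: C^0 (no arcs between x and C in either direction), C^- (all three arcs from x to C present, no arcs from C to x), C^+ (all three arcs from C to x present, no arcs from x to C), or C^± (all six arcs between x and C present). That is, for every x ∉ C, the arcs from C to x are either all present or all absent, and the arcs from x to C are either all present or all absent. -/
/-- `x` is in class `C⁰` relative to `C = {u,v,w}`: no arcs between `x` and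
`C` in either direction. -/
def InC0 {V : Type} (G : SDigraph V) (u v w x : V) : Prop :=
  G.Adj x u = false ∧ G.Adj x v = false ∧ G.Adj x w = false ∧
  G.Adj u x = false ∧ G.Adj v x = false ∧ G.Adj w x = false

/-- `x` is in class `C⁻`: all three arcs from `x` to `C` are present and no
arcs from `C` to `x`. -/
def InCminus {V : Type} (G : SDigraph V) (u v w x : V) : Prop :=
  G.Adj x u = true ∧ G.Adj x v = true ∧ G.Adj x w = true ∧
  G.Adj u x = false ∧ G.Adj v x = false ∧ G.Adj w x = false

/-- `x` is in class `C⁺`: all three arcs from `C` to `x` are present and no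
arcs from `x` to `C`. -/
def InCplus {V : Type} (G : SDigraph V) (u v w x : V) : Prop :=
  G.Adj x u = false ∧ G.Adj x v = false ∧ G.Adj x w = false ∧
  G.Adj u x = true ∧ G.Adj v x = true ∧ G.Adj w x = true

/-- `x` is in class `C^±`: all six arcs between `x` and `C` are present. -/
def InCpm {V : Type} (G : SDigraph V) (u v w x : V) : Prop :=
  G.Adj x u = true ∧ G.Adj x v = true ∧ G.Adj x w = true ∧
  G.Adj u x = true ∧ G.Adj v x = true ∧ G.Adj w x = true

open Finset Equiv

section
variable {V : Type} {G : SDigraph V} {a b c : V}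

def SDigraph.reverse_s9 (G : SDigraph V) : SDigraph V := ⟨fun x y => G.Adj y x, G.irrefl⟩

@[simp]
lemma SDigraph.reverse_adj (x y : V) : G.reverse_s9.Adj x y = G.Adj y x := rfl

lemma InducesC3.rotate (h : InducesC3 G a b c) : InducesC3 G b c a := by
  unfold InducesC3 at *
  tauto

lemma inducesC3_reverse_iff : InducesC3 G.reverse_s9 a b c ↔ InducesC3 G a c b := by
  simp only [InducesC3, SDigraph.reverse_adj]
  tauto

end

section
variable {V : Type} [DecidableEq V] {G : SDigraph V}

def SDigraph.switch_s9 (G : SDigraph V) (v₁ v₂ v₃ v₄ : V) (h14 : v₁ ≠ v₄) (h32 : v₃ ≠ v₂) :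
    SDigraph V where
  Adj x y :=
    if (x = v₁ ∧ y = v₂) ∨ (x = v₃ ∧ y = v₄) then false
    else if (x = v₁ ∧ y = v₄) ∨ (x = v₃ ∧ y = v₂) then true
    else G.Adj x y
  irrefl x := by grind [G.irrefl]

lemma twoSwitch_switch {v₁ v₂ v₃ v₄ : V}
    (h12 : v₁ ≠ v₂) (h13 : v₁ ≠ v₃) (h14 : v₁ ≠ v₄) (h23 : v₂ ≠ v₃) (h24 : v₂ ≠ v₄)
    (h34 : v₃ ≠ v₄) (g12 : G.Adj v₁ v₂ = true) (g34 : G.Adj v₃ v₄ = true)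
    (g14 : G.Adj v₁ v₄ = false) (g32 : G.Adj v₃ v₂ = false) :
    TwoSwitch G (G.switch_s9 v₁ v₂ v₃ v₄ h14 h23.symm) :=
  ⟨v₁, v₂, v₃, v₄, h12, h13, h14, h23, h24, h34, g12, g34, g14, g32, fun _ _ => rfl⟩

end

lemma card_filter_comp_perm {V : Type} [Fintype V] (p : V → Bool) (σ : Perm V) :
    #{y | p (σ y) = true} = #{y | p y = true} :=
  card_equiv σ fun y => by simp

section
variable {V : Type} [Fintype V] [DecidableEq V] {d : V → ℕ × ℕ} {G H : SDigraph V}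
  {a b c x : V}

lemma TwoSwitch.outDeg_eq (h : TwoSwitch G H) (x : V) : H.outDeg x = G.outDeg x := by
  obtain ⟨v₁, v₂, v₃, v₄, h12, h13, h14, h23, h24, h34, g12, g34, g14, g32, hH⟩ := h
  obtain ⟨σ, hσ⟩ : ∃ σ : Perm V, ∀ y, H.Adj x y = G.Adj x (σ y) := by
    by_cases hx : x = v₁ ∨ x = v₃
    · refine ⟨swap v₂ v₄, fun y => ?_⟩
      rw [hH, swap_apply_def]
      split_ifs <;> grind
    · exact ⟨1, fun y => by rw [hH, Perm.one_apply]; grind⟩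
  simp only [SDigraph.outDeg, hσ]
  exact card_filter_comp_perm _ σ

lemma TwoSwitch.inDeg_eq (h : TwoSwitch G H) (x : V) : H.inDeg x = G.inDeg x := by
  obtain ⟨v₁, v₂, v₃, v₄, h12, h13, h14, h23, h24, h34, g12, g34, g14, g32, hH⟩ := h
  obtain ⟨σ, hσ⟩ : ∃ σ : Perm V, ∀ y, H.Adj y x = G.Adj (σ y) x := by
    by_cases hx : x = v₂ ∨ x = v₄
    · refine ⟨swap v₁ v₃, fun y => ?_⟩
      rw [hH, swap_apply_def]
      split_ifs <;> grind
    · exact ⟨1, fun y => by rw [hH, Perm.one_apply]; grind⟩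
  simp only [SDigraph.inDeg, hσ]
  exact card_filter_comp_perm (G.Adj · x) σ

lemma TwoSwitch.realizes (h : TwoSwitch G H) (hG : Realizes G d) : Realizes H d := fun x => by
  rw [h.outDeg_eq, h.inDeg_eq]
  exact hG x

lemma Realizes.reverse_s9 (hG : Realizes G d) : Realizes G.reverse_s9 fun v => (d v).swap :=
  fun v => ⟨(hG v).2, (hG v).1⟩

def ForcesC3 (d : V → ℕ × ℕ) (a b c : V) : Prop :=
  ∀ G : SDigraph V, Realizes G d → InducesC3 G a b c

lemma ForcesC3.rotate (hd : ForcesC3 d a b c) : ForcesC3 d b c a :=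
  fun G hG => (hd G hG).rotate

lemma ForcesC3.reverse_s9 (hd : ForcesC3 d a b c) : ForcesC3 (fun v => (d v).swap) a c b :=
  fun H hH => inducesC3_reverse_iff.mp (hd H.reverse_s9 hH.reverse_s9)

lemma ForcesC3.adj_of_adj (hd : ForcesC3 d a b c) (hG : Realizes G d)
    (hab : a ≠ b) (hbc : b ≠ c) (hac : a ≠ c) (hxa : x ≠ a) (hxb : x ≠ b) (hxc : x ≠ c)
    (gbc : G.Adj b c = true) (gac : G.Adj a c = false) (gba : G.Adj b a = false)
    (gax : G.Adj a x = true) : G.Adj b x = true := by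
  by_contra gbx
  rw [Bool.not_eq_true] at gbx
  have hH := hd _ ((twoSwitch_switch hxa.symm hab hac hxb hxc hbc gax gbc gac gbx).realizes hG)
  rcases hH with ⟨-, h, -⟩ | ⟨h, -⟩ <;> simp [SDigraph.switch_s9, hab.symm, hxa.symm, hac, gba] at h

lemma ForcesC3.adj_all_or_none (hd : ForcesC3 d a b c) (hG : Realizes G d)
    (hab : a ≠ b) (hbc : b ≠ c) (hac : a ≠ c)
    (hcyc : G.Adj a b = true ∧ G.Adj b c = true ∧ G.Adj c a = true)
    (hxa : x ≠ a) (hxb : x ≠ b) (hxc : x ≠ c) :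
    (G.Adj a x = true ∧ G.Adj b x = true ∧ G.Adj c x = true) ∨
      (G.Adj a x = false ∧ G.Adj b x = false ∧ G.Adj c x = false) := by
  obtain ⟨gab, gbc, gca⟩ := hcyc
  obtain ⟨gba, gcb, gac⟩ : G.Adj b a = false ∧ G.Adj c b = false ∧ G.Adj a c = false := by
    rcases hd G hG with ⟨-, -, -, h⟩ | ⟨-, -, -, h, -⟩
    · exact h
    · simp [gab] at h
  have hab' := hd.adj_of_adj hG hab hbc hac hxa hxb hxc gbc gac gba
  have hbc' := hd.rotate.adj_of_adj hG hbc hac.symm hab.symm hxb hxc hxa gca gba gcb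
  have hca' := hd.rotate.rotate.adj_of_adj hG hac.symm hab hbc.symm hxc hxa hxb gab gcb gac
  revert hab' hbc' hca'
  cases G.Adj a x <;> cases G.Adj b x <;> cases G.Adj c x <;> decide

end

/-- if every realization of the digraphic sequence `d`
induces a directed 3-cycle on the three distinct vertices `u, v, w`, and `G`
is a realization with arcs `(u,v),(v,w),(w,u)`, then every vertex `x` outside
`C = {u,v,w}` has its arcs from `C` all present or all absent, and its arcs to
`C` all present or all absent; i.e. `x` lies in one of the classes
`C⁰, C⁻, C⁺, C^±`. -/
theorem statement9 {V : Type} [Fintype V] [DecidableEq V] (d : V → ℕ × ℕ)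
    (u v w : V) (huv : u ≠ v) (hvw : v ≠ w) (huw : u ≠ w)
    (hanchor : ∀ G : SDigraph V, Realizes G d → InducesC3 G u v w)
    (G : SDigraph V) (hG : Realizes G d)
    (horient : G.Adj u v = true ∧ G.Adj v w = true ∧ G.Adj w u = true)
    (x : V) (hxu : x ≠ u) (hxv : x ≠ v) (hxw : x ≠ w) :
    ((G.Adj u x = true ∧ G.Adj v x = true ∧ G.Adj w x = true) ∨
      (G.Adj u x = false ∧ G.Adj v x = false ∧ G.Adj w x = false)) ∧
    ((G.Adj x u = true ∧ G.Adj x v = true ∧ G.Adj x w = true) ∨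
      (G.Adj x u = false ∧ G.Adj x v = false ∧ G.Adj x w = false)) := by
  refine ⟨ForcesC3.adj_all_or_none hanchor hG huv hvw huw horient hxu hxv hxw, ?_⟩
  obtain ⟨guv, gvw, gwu⟩ := horient
  have hrev := (ForcesC3.reverse_s9 hanchor).adj_all_or_none (G := G.reverse_s9) hG.reverse_s9
    huw hvw.symm huv ⟨gwu, gvw, guv⟩ hxu hxw hxv
  simp only [SDigraph.reverse_adj] at hrev
  tauto
end
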